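/- arXiv:2411.08595 — 5 statements merged into one kernel-verified Lean document; each statement's English description precedes it below -/
import Mathlib

section
/- Let W be the extended map W(a, λ) = (M(a) + Kᵀλ, −Ka + l) with M strongly monotone of constant ν > 0, and let W_ε be its Tikhonov regularization W_ε(a, λ) = W(a, λ) + (0, ελ). Let (a*, λ*) solve the variational inequality for W over ℝ^D × ℝ₊^n, and let (a*_ε, λ*_ε) solve the variational inequality for W_ε over ℝ^D × ℝ₊^n. Then ‖λ* − λ*_ε‖ ≤ ‖λ*‖. -/
/-- Let `(a*, λ*)` solve the variational inequality for the extended map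
`W(a,λ) = (M(a)+Kᵀλ, −Ka+l)` over `ℝ^D × ℝ₊^n` and `(a*_ε, λ*_ε)` solve the variational
inequality for its Tikhonov regularization `W_ε(a,λ) = W(a,λ) + (0, ελ)` over the same
set, with `M` strongly monotone of constant `ν > 0`. Then `‖λ* − λ*_ε‖ ≤ ‖λ*‖`. -/
theorem stmt_3 {D n : ℕ} (M : EuclideanSpace ℝ (Fin D) → EuclideanSpace ℝ (Fin D))
    (ν : ℝ) (hν : 0 < ν)
    (hmono : ∀ u v, (inner ℝ (M u - M v) (u - v) : ℝ) ≥ ν * ‖u - v‖ ^ 2)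
    (K : EuclideanSpace ℝ (Fin D) →L[ℝ] EuclideanSpace ℝ (Fin n))
    (l : EuclideanSpace ℝ (Fin n)) (ε : ℝ) (hε : 0 < ε)
    (astar : EuclideanSpace ℝ (Fin D)) (lamstar : EuclideanSpace ℝ (Fin n))
    (aeps : EuclideanSpace ℝ (Fin D)) (lameps : EuclideanSpace ℝ (Fin n))
    (hlamstar : ∀ i, 0 ≤ lamstar i) (hlameps : ∀ i, 0 ≤ lameps i)
    (hVI : ∀ (a' : EuclideanSpace ℝ (Fin D)) (lam' : EuclideanSpace ℝ (Fin n)),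
      (∀ i, 0 ≤ lam' i) →
      (inner ℝ (M astar + ContinuousLinearMap.adjoint K lamstar) (a' - astar) : ℝ)
        + (inner ℝ (-(K astar) + l) (lam' - lamstar) : ℝ) ≥ 0)
    (hVIeps : ∀ (a' : EuclideanSpace ℝ (Fin D)) (lam' : EuclideanSpace ℝ (Fin n)),
      (∀ i, 0 ≤ lam' i) →
      (inner ℝ (M aeps + ContinuousLinearMap.adjoint K lameps) (a' - aeps) : ℝ)
        + (inner ℝ (-(K aeps) + l + ε • lameps) (lam' - lameps) : ℝ) ≥ 0) :
    ‖lamstar - lameps‖ ≤ ‖lamstar‖ := by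
  have hM := hmono astar aeps
  have h1 := hVI aeps lameps hlameps
  have h2 := hVIeps astar lamstar hlamstar
  have hn : (0:ℝ) ≤ ν * ‖astar - aeps‖ ^ 2 := by positivity
  simp only [inner_add_left, inner_sub_left, inner_sub_right, inner_add_right,
    inner_neg_left, inner_smul_left, ContinuousLinearMap.adjoint_inner_left,
    RCLike.ofReal_real_eq_id, id_eq, map_sub, conj_trivial] at h1 h2 hM
  have c1 : (inner ℝ (K astar) lamstar : ℝ) = inner ℝ lamstar (K astar) := real_inner_comm _ _
  have c2 : (inner ℝ (K astar) lameps : ℝ) = inner ℝ lameps (K astar) := real_inner_comm _ _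
  have c3 : (inner ℝ (K aeps) lamstar : ℝ) = inner ℝ lamstar (K aeps) := real_inner_comm _ _
  have c4 : (inner ℝ (K aeps) lameps : ℝ) = inner ℝ lameps (K aeps) := real_inner_comm _ _
  have key : (inner ℝ lameps lamstar : ℝ) - inner ℝ lameps lameps ≥ 0 := by nlinarith
  have hd : (inner ℝ (lamstar - lameps) (lamstar - lameps) : ℝ)
      ≤ inner ℝ (lamstar - lameps) lamstar := by
    simp only [inner_sub_left, inner_sub_right]
    have := real_inner_comm lamstar lameps
    linarith
  have hsq : ‖lamstar - lameps‖ ^ 2 ≤ ‖lamstar - lameps‖ * ‖lamstar‖ := by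
    calc ‖lamstar - lameps‖ ^ 2 = inner ℝ (lamstar - lameps) (lamstar - lameps) := by
          rw [real_inner_self_eq_norm_sq]
      _ ≤ inner ℝ (lamstar - lameps) lamstar := hd
      _ ≤ ‖lamstar - lameps‖ * ‖lamstar‖ := real_inner_le_norm _ _
  rcases eq_or_lt_of_le (norm_nonneg (lamstar - lameps)) with h | h
  · rw [← h]; exact norm_nonneg _
  · nlinarith
end

section
/- Let W(a, λ) = (M(a) + Kᵀλ, −Ka + l) with M strongly monotone of constant ν > 0, and W_ε(a, λ) = W(a, λ) + (0, ελ) for ε > 0. If (a*, λ*) solves VI(W, ℝ^D × ℝ₊^n) and (a*_ε, λ*_ε) solves VI(W_ε, ℝ^D × ℝ₊^n), then ν‖a* − a*_ε‖² + ε‖λ* − λ*_ε‖² ≤ ε⟨λ*, λ* − λ*_ε⟩, and consequently ν‖a* − a*_ε‖² ≤ ε‖λ*‖². -/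
/-- If `(a*, λ*)` solves `VI(W, ℝ^D × ℝ₊^n)` and `(a*_ε, λ*_ε)` solves
`VI(W_ε, ℝ^D × ℝ₊^n)`, where `W(a,λ) = (M(a)+Kᵀλ, −Ka+l)` with `M` strongly monotone of
constant `ν > 0` and `W_ε(a,λ) = W(a,λ) + (0, ελ)` for `ε > 0`, then
`ν‖a* − a*_ε‖² + ε‖λ* − λ*_ε‖² ≤ ε⟨λ*, λ* − λ*_ε⟩`, and consequently
`ν‖a* − a*_ε‖² ≤ ε‖λ*‖²`. -/
theorem stmt_4 {D n : ℕ} (M : EuclideanSpace ℝ (Fin D) → EuclideanSpace ℝ (Fin D))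
    (ν : ℝ) (hν : 0 < ν)
    (hmono : ∀ u v, (inner ℝ (M u - M v) (u - v) : ℝ) ≥ ν * ‖u - v‖ ^ 2)
    (K : EuclideanSpace ℝ (Fin D) →L[ℝ] EuclideanSpace ℝ (Fin n))
    (l : EuclideanSpace ℝ (Fin n)) (ε : ℝ) (hε : 0 < ε)
    (astar : EuclideanSpace ℝ (Fin D)) (lamstar : EuclideanSpace ℝ (Fin n))
    (aeps : EuclideanSpace ℝ (Fin D)) (lameps : EuclideanSpace ℝ (Fin n))
    (hlamstar : ∀ i, 0 ≤ lamstar i) (hlameps : ∀ i, 0 ≤ lameps i)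
    (hVI : ∀ (a' : EuclideanSpace ℝ (Fin D)) (lam' : EuclideanSpace ℝ (Fin n)),
      (∀ i, 0 ≤ lam' i) →
      (inner ℝ (M astar + ContinuousLinearMap.adjoint K lamstar) (a' - astar) : ℝ)
        + (inner ℝ (-(K astar) + l) (lam' - lamstar) : ℝ) ≥ 0)
    (hVIeps : ∀ (a' : EuclideanSpace ℝ (Fin D)) (lam' : EuclideanSpace ℝ (Fin n)),
      (∀ i, 0 ≤ lam' i) →
      (inner ℝ (M aeps + ContinuousLinearMap.adjoint K lameps) (a' - aeps) : ℝ)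
        + (inner ℝ (-(K aeps) + l + ε • lameps) (lam' - lameps) : ℝ) ≥ 0) :
    ν * ‖astar - aeps‖ ^ 2 + ε * ‖lamstar - lameps‖ ^ 2
      ≤ ε * (inner ℝ lamstar (lamstar - lameps) : ℝ)
    ∧ ν * ‖astar - aeps‖ ^ 2 ≤ ε * ‖lamstar‖ ^ 2 := by
  have h1 := hVI aeps lameps hlameps
  have h2 := hVIeps astar lamstar hlamstar
  have hm := hmono astar aeps
  simp only [inner_add_left, inner_sub_left, inner_sub_right, inner_neg_left,
    ContinuousLinearMap.adjoint_inner_left, real_inner_smul_left] at h1 h2 hm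
  have e1 : ‖lamstar - lameps‖ ^ 2
      = (inner ℝ lamstar lamstar : ℝ) - 2 * inner ℝ lamstar lameps + inner ℝ lameps lameps := by
    rw [← real_inner_self_eq_norm_sq]
    simp only [inner_sub_left, inner_sub_right]
    rw [real_inner_comm lameps lamstar]; ring
  have e2 : ‖lamstar‖ ^ 2 = (inner ℝ lamstar lamstar : ℝ) := (real_inner_self_eq_norm_sq _).symm
  have c1 := real_inner_comm (K astar) lameps
  have c2 := real_inner_comm (K astar) lamstar
  have c3 := real_inner_comm (K aeps) lamstar
  have c4 := real_inner_comm (K aeps) lameps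
  have c5 := real_inner_comm lamstar lameps
  have key : ν * ‖astar - aeps‖ ^ 2 + ε * ‖lamstar - lameps‖ ^ 2
      ≤ ε * (inner ℝ lamstar (lamstar - lameps) : ℝ) := by
    simp only [inner_sub_right, e1]
    nlinarith [h1, h2, hm]
  refine ⟨key, ?_⟩
  have hcs : (inner ℝ lamstar (lamstar - lameps) : ℝ) ≤ ‖lamstar‖ * ‖lamstar - lameps‖ :=
    real_inner_le_norm _ _
  nlinarith [key, hcs, sq_nonneg (‖lamstar‖ - ‖lamstar - lameps‖), norm_nonneg (lamstar - lameps), norm_nonneg lamstar, sq_nonneg ‖astar - aeps‖]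
end

section
/- Let W(a, λ) = (M(a) + Kᵀλ, −Ka + l) with M strongly monotone with constant ν > 0. For ε > 0 let W_ε(a, λ) = W(a, λ) + (0, ελ), and let z_ε = (a_ε, λ_ε) denote a solution of VI(W_ε, ℝ^D × ℝ₊^n). For two parameters ε_t, ε_{t−1} > 0 with respective solutions (a_t, λ_t) and (a_{t−1}, λ_{t−1}), the following holds: ν‖a_t − a_{t−1}‖² + ε_t‖λ_t − λ_{t−1}‖² ≤ |ε_{t−1} − ε_t| · ‖λ_{t−1}‖ · ‖λ_t − λ_{t−1}‖. -/
/-- Key inequality relating solutions of two consecutive regularized VIs: if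
`(a_t, λ_t)` solves `VI(W_{ε_t}, ℝ^D × ℝ₊^n)` and `(a_{t−1}, λ_{t−1})` solves
`VI(W_{ε_{t−1}}, ℝ^D × ℝ₊^n)`, where `W_ε(a,λ) = (M(a)+Kᵀλ, −Ka+l+ελ)` and `M` is
strongly monotone with constant `ν > 0`, then
`ν‖a_t − a_{t−1}‖² + ε_t‖λ_t − λ_{t−1}‖² ≤ |ε_{t−1} − ε_t|‖λ_{t−1}‖‖λ_t − λ_{t−1}‖`. -/
theorem stmt_6 {D n : ℕ} (M : EuclideanSpace ℝ (Fin D) → EuclideanSpace ℝ (Fin D))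
    (ν : ℝ) (hν : 0 < ν)
    (hmono : ∀ u v, (inner ℝ (M u - M v) (u - v) : ℝ) ≥ ν * ‖u - v‖ ^ 2)
    (K : EuclideanSpace ℝ (Fin D) →L[ℝ] EuclideanSpace ℝ (Fin n))
    (l : EuclideanSpace ℝ (Fin n)) (εt εt1 : ℝ) (hεt : 0 < εt) (hεt1 : 0 < εt1)
    (at_ : EuclideanSpace ℝ (Fin D)) (lamt : EuclideanSpace ℝ (Fin n))
    (at1 : EuclideanSpace ℝ (Fin D)) (lamt1 : EuclideanSpace ℝ (Fin n))
    (hlamt : ∀ i, 0 ≤ lamt i) (hlamt1 : ∀ i, 0 ≤ lamt1 i)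
    (hVIt : ∀ (a' : EuclideanSpace ℝ (Fin D)) (lam' : EuclideanSpace ℝ (Fin n)),
      (∀ i, 0 ≤ lam' i) →
      (inner ℝ (M at_ + ContinuousLinearMap.adjoint K lamt) (a' - at_) : ℝ)
        + (inner ℝ (-(K at_) + l + εt • lamt) (lam' - lamt) : ℝ) ≥ 0)
    (hVIt1 : ∀ (a' : EuclideanSpace ℝ (Fin D)) (lam' : EuclideanSpace ℝ (Fin n)),
      (∀ i, 0 ≤ lam' i) →
      (inner ℝ (M at1 + ContinuousLinearMap.adjoint K lamt1) (a' - at1) : ℝ)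
        + (inner ℝ (-(K at1) + l + εt1 • lamt1) (lam' - lamt1) : ℝ) ≥ 0) :
    ν * ‖at_ - at1‖ ^ 2 + εt * ‖lamt - lamt1‖ ^ 2
      ≤ |εt1 - εt| * ‖lamt1‖ * ‖lamt - lamt1‖ := by
  have h1 := hVIt at1 lamt1 hlamt1
  have h2 := hVIt1 at_ lamt hlamt
  -- sum of the two VI inequalities
  have hsum : (inner ℝ (M at_ - M at1) (at_ - at1) : ℝ)
      + (inner ℝ (εt • lamt - εt1 • lamt1) (lamt - lamt1) : ℝ) ≤ 0 := by
    have key : (inner ℝ (M at_ - M at1) (at_ - at1) : ℝ)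
        + (inner ℝ (εt • lamt - εt1 • lamt1) (lamt - lamt1) : ℝ)
        = -(((inner ℝ (M at_ + ContinuousLinearMap.adjoint K lamt) (at1 - at_) : ℝ)
            + (inner ℝ (-(K at_) + l + εt • lamt) (lamt1 - lamt) : ℝ))
          + ((inner ℝ (M at1 + ContinuousLinearMap.adjoint K lamt1) (at_ - at1) : ℝ)
            + (inner ℝ (-(K at1) + l + εt1 • lamt1) (lamt - lamt1) : ℝ))) := by
      simp only [inner_sub_left, inner_sub_right, inner_add_left, inner_add_right,
        inner_neg_left, inner_neg_right, real_inner_smul_left, real_inner_smul_right,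
        ContinuousLinearMap.adjoint_inner_left]
      rw [real_inner_comm (K at_) lamt, real_inner_comm (K at_) lamt1,
        real_inner_comm (K at1) lamt, real_inner_comm (K at1) lamt1]
      ring
    rw [key]
    linarith
  -- split the λ term
  have hsplit : (inner ℝ (εt • lamt - εt1 • lamt1) (lamt - lamt1) : ℝ)
      = εt * ‖lamt - lamt1‖ ^ 2 + (εt - εt1) * (inner ℝ lamt1 (lamt - lamt1) : ℝ) := by
    have : εt • lamt - εt1 • lamt1 = εt • (lamt - lamt1) + (εt - εt1) • lamt1 := by
      module
    rw [this, inner_add_left, real_inner_smul_left, real_inner_smul_left,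
      real_inner_self_eq_norm_sq]
  have hmonoat := hmono at_ at1
  have hCS : (εt1 - εt) * (inner ℝ lamt1 (lamt - lamt1) : ℝ)
      ≤ |εt1 - εt| * (‖lamt1‖ * ‖lamt - lamt1‖) := by
    calc (εt1 - εt) * (inner ℝ lamt1 (lamt - lamt1) : ℝ)
        ≤ |(εt1 - εt) * (inner ℝ lamt1 (lamt - lamt1) : ℝ)| := le_abs_self _
      _ = |εt1 - εt| * |(inner ℝ lamt1 (lamt - lamt1) : ℝ)| := abs_mul _ _
      _ ≤ |εt1 - εt| * (‖lamt1‖ * ‖lamt - lamt1‖) := by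
          exact mul_le_mul_of_nonneg_left (abs_real_inner_le_norm _ _) (abs_nonneg _)
  rw [hsplit] at hsum
  nlinarith [hsum, hmonoat, hCS]
end

section
/- Under the hypotheses of the previous statement (solutions of two regularized VIs with parameters ε_t, ε_{t−1} > 0 and with ‖λ_{t−1}‖ ≤ Λ), one has ‖λ_t − λ_{t−1}‖ ≤ |ε_{t−1} − ε_t| · Λ / ε_t and ‖a_t − a_{t−1}‖² ≤ (ε_{t−1} − ε_t)² · Λ² / (ν · ε_t). -/
/-- Under the hypotheses of the previous statement (solutions of two regularized VIs
with parameters `ε_t, ε_{t−1} > 0` and with `‖λ_{t−1}‖ ≤ Λ`), one has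
`‖λ_t − λ_{t−1}‖ ≤ |ε_{t−1} − ε_t|Λ/ε_t` and
`‖a_t − a_{t−1}‖² ≤ (ε_{t−1} − ε_t)²Λ²/(ν ε_t)`. -/
theorem stmt_7 {D n : ℕ} (M : EuclideanSpace ℝ (Fin D) → EuclideanSpace ℝ (Fin D))
    (ν : ℝ) (hν : 0 < ν)
    (hmono : ∀ u v, (inner ℝ (M u - M v) (u - v) : ℝ) ≥ ν * ‖u - v‖ ^ 2)
    (K : EuclideanSpace ℝ (Fin D) →L[ℝ] EuclideanSpace ℝ (Fin n))
    (l : EuclideanSpace ℝ (Fin n)) (εt εt1 : ℝ) (hεt : 0 < εt) (hεt1 : 0 < εt1)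
    (at_ : EuclideanSpace ℝ (Fin D)) (lamt : EuclideanSpace ℝ (Fin n))
    (at1 : EuclideanSpace ℝ (Fin D)) (lamt1 : EuclideanSpace ℝ (Fin n))
    (Λ : ℝ) (hlamt : ∀ i, 0 ≤ lamt i) (hlamt1 : ∀ i, 0 ≤ lamt1 i)
    (hVIt : ∀ (a' : EuclideanSpace ℝ (Fin D)) (lam' : EuclideanSpace ℝ (Fin n)),
      (∀ i, 0 ≤ lam' i) →
      (inner ℝ (M at_ + ContinuousLinearMap.adjoint K lamt) (a' - at_) : ℝ)
        + (inner ℝ (-(K at_) + l + εt • lamt) (lam' - lamt) : ℝ) ≥ 0)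
    (hVIt1 : ∀ (a' : EuclideanSpace ℝ (Fin D)) (lam' : EuclideanSpace ℝ (Fin n)),
      (∀ i, 0 ≤ lam' i) →
      (inner ℝ (M at1 + ContinuousLinearMap.adjoint K lamt1) (a' - at1) : ℝ)
        + (inner ℝ (-(K at1) + l + εt1 • lamt1) (lam' - lamt1) : ℝ) ≥ 0)
    (hΛ : ‖lamt1‖ ≤ Λ) :
    ‖lamt - lamt1‖ ≤ |εt1 - εt| * Λ / εt
      ∧ ‖at_ - at1‖ ^ 2 ≤ (εt1 - εt) ^ 2 * Λ ^ 2 / (ν * εt) := by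
  have h1 := hVIt at1 lamt1 hlamt1
  have h2 := hVIt1 at_ lamt hlamt
  have hm := hmono at_ at1
  -- adjoint identities
  have hadj1 : (inner ℝ (ContinuousLinearMap.adjoint K lamt) (at1 - at_) : ℝ)
      = inner ℝ lamt (K at1) - inner ℝ lamt (K at_) := by
    rw [ContinuousLinearMap.adjoint_inner_left, map_sub, inner_sub_right]
  have hadj2 : (inner ℝ (ContinuousLinearMap.adjoint K lamt1) (at_ - at1) : ℝ)
      = inner ℝ lamt1 (K at_) - inner ℝ lamt1 (K at1) := by
    rw [ContinuousLinearMap.adjoint_inner_left, map_sub, inner_sub_right]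
  have hkey : ν * ‖at_ - at1‖ ^ 2 + εt * ‖lamt - lamt1‖ ^ 2
      ≤ (εt1 - εt) * (inner ℝ lamt1 (lamt - lamt1) : ℝ) := by
    have e1 : (inner ℝ (M at_ + ContinuousLinearMap.adjoint K lamt) (at1 - at_) : ℝ)
        = inner ℝ (M at_) (at1 - at_) + (inner ℝ lamt (K at1) - inner ℝ lamt (K at_)) := by
      rw [inner_add_left, hadj1]
    have e2 : (inner ℝ (M at1 + ContinuousLinearMap.adjoint K lamt1) (at_ - at1) : ℝ)
        = inner ℝ (M at1) (at_ - at1) + (inner ℝ lamt1 (K at_) - inner ℝ lamt1 (K at1)) := by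
      rw [inner_add_left, hadj2]
    have e3 : (inner ℝ (-(K at_) + l + εt • lamt) (lamt1 - lamt) : ℝ)
        = -(inner ℝ (K at_) lamt1 - inner ℝ (K at_) lamt) + (inner ℝ l lamt1 - inner ℝ l lamt)
          + εt * (inner ℝ lamt lamt1 - inner ℝ lamt lamt) := by
      rw [inner_add_left, inner_add_left, inner_neg_left, real_inner_smul_left,
        inner_sub_right, inner_sub_right, inner_sub_right]
    have e4 : (inner ℝ (-(K at1) + l + εt1 • lamt1) (lamt - lamt1) : ℝ)
        = -(inner ℝ (K at1) lamt - inner ℝ (K at1) lamt1) + (inner ℝ l lamt - inner ℝ l lamt1)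
          + εt1 * (inner ℝ lamt1 lamt - inner ℝ lamt1 lamt1) := by
      rw [inner_add_left, inner_add_left, inner_neg_left, real_inner_smul_left,
        inner_sub_right, inner_sub_right, inner_sub_right]
    have e5 : (inner ℝ (M at_ - M at1) (at_ - at1) : ℝ)
        = inner ℝ (M at_) (at_ - at1) - inner ℝ (M at1) (at_ - at1) := inner_sub_left _ _ _
    have e6 : (inner ℝ (M at_) (at1 - at_) : ℝ) = - inner ℝ (M at_) (at_ - at1) := by
      rw [← inner_neg_right]; congr 1; abel
    have c1 : (inner ℝ lamt (K at_) : ℝ) = inner ℝ (K at_) lamt := real_inner_comm _ _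
    have c2 : (inner ℝ lamt (K at1) : ℝ) = inner ℝ (K at1) lamt := real_inner_comm _ _
    have c3 : (inner ℝ lamt1 (K at_) : ℝ) = inner ℝ (K at_) lamt1 := real_inner_comm _ _
    have c4 : (inner ℝ lamt1 (K at1) : ℝ) = inner ℝ (K at1) lamt1 := real_inner_comm _ _
    have c5 : (inner ℝ lamt lamt1 : ℝ) = inner ℝ lamt1 lamt := real_inner_comm _ _
    have nA : (inner ℝ lamt lamt : ℝ) = ‖lamt‖ ^ 2 := real_inner_self_eq_norm_sq _
    have nB : (inner ℝ lamt1 lamt1 : ℝ) = ‖lamt1‖ ^ 2 := real_inner_self_eq_norm_sq _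
    have nd : ‖lamt - lamt1‖ ^ 2 = ‖lamt‖ ^ 2 - 2 * inner ℝ lamt1 lamt + ‖lamt1‖ ^ 2 := by
      rw [← real_inner_self_eq_norm_sq, inner_sub_sub_self, nA, nB, c5]; ring
    have id1 : (inner ℝ lamt1 (lamt - lamt1) : ℝ) = inner ℝ lamt1 lamt - ‖lamt1‖ ^ 2 := by
      rw [inner_sub_right, nB]
    rw [e1, e3, e6, c1, c2, nA, c5] at h1
    rw [e2, e4, c3, c4, nB] at h2
    rw [e5] at hm
    rw [id1, nd]
    linarith [h1, h2, hm]
  have hC : 0 ≤ Λ := le_trans (norm_nonneg _) hΛ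
  have hcs : (inner ℝ lamt1 (lamt - lamt1) : ℝ) ≤ ‖lamt1‖ * ‖lamt - lamt1‖ :=
    real_inner_le_norm _ _
  have hub : (εt1 - εt) * (inner ℝ lamt1 (lamt - lamt1) : ℝ)
      ≤ |εt1 - εt| * Λ * ‖lamt - lamt1‖ := by
    calc (εt1 - εt) * (inner ℝ lamt1 (lamt - lamt1) : ℝ)
        ≤ |(εt1 - εt) * (inner ℝ lamt1 (lamt - lamt1) : ℝ)| := le_abs_self _
      _ = |εt1 - εt| * |(inner ℝ lamt1 (lamt - lamt1) : ℝ)| := abs_mul _ _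
      _ ≤ |εt1 - εt| * (‖lamt1‖ * ‖lamt - lamt1‖) := by
          gcongr; exact abs_real_inner_le_norm _ _
      _ ≤ |εt1 - εt| * Λ * ‖lamt - lamt1‖ := by
          rw [mul_assoc]; gcongr
  have hkey2 : ν * ‖at_ - at1‖ ^ 2 + εt * ‖lamt - lamt1‖ ^ 2
      ≤ |εt1 - εt| * Λ * ‖lamt - lamt1‖ := hkey.trans hub
  have hna : 0 ≤ ‖at_ - at1‖ ^ 2 := sq_nonneg _
  have hnl : 0 ≤ ‖lamt - lamt1‖ := norm_nonneg _
  have h5 : εt * ‖lamt - lamt1‖ ≤ |εt1 - εt| * Λ := by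
    rcases eq_or_lt_of_le hnl with h | h
    · rw [← h, mul_zero]; positivity
    · have h6 : εt * ‖lamt - lamt1‖ * ‖lamt - lamt1‖
          ≤ |εt1 - εt| * Λ * ‖lamt - lamt1‖ := by nlinarith [hkey2, hna, hν]
      exact le_of_mul_le_mul_right h6 h
  constructor
  · rw [div_eq_inv_mul, ← mul_le_mul_iff_right₀ hεt, ← mul_assoc, mul_inv_cancel₀ hεt.ne',
      one_mul]
    exact h5
  · rw [le_div_iff₀ (mul_pos hν hεt)]
    have h4 : ν * ‖at_ - at1‖ ^ 2 * εt ≤ (|εt1 - εt| * Λ) * (εt * ‖lamt - lamt1‖) := by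
      have hmul := mul_le_mul_of_nonneg_right hkey2 hεt.le
      have hpos : 0 ≤ εt * ‖lamt - lamt1‖ ^ 2 * εt := by positivity
      nlinarith [hmul, hpos]
    have h7 : (|εt1 - εt| * Λ) * (εt * ‖lamt - lamt1‖)
        ≤ (|εt1 - εt| * Λ) * (|εt1 - εt| * Λ) :=
      mul_le_mul_of_nonneg_left h5 (by positivity)
    have e : (|εt1 - εt| * Λ) * (|εt1 - εt| * Λ) = (εt1 - εt) ^ 2 * Λ ^ 2 := by
      rw [mul_mul_mul_comm, ← sq, ← sq, sq_abs]
    have h8 := (h4.trans h7).trans e.le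
    linarith [h8]
end

section
/- (Chung's Lemma, recursion form) Suppose {b_n} is a sequence of nonnegative reals such that for all n ≥ n₀, b_{n+1} ≤ (1 − c/n^s) b_n + c'/n^t, where 0 < s < 1, t > s, c > 0, c' > 0. Then limsup_{n→∞} n^{t−s} b_n ≤ c'/c. -/
open Filter Finset Topology

/-!
Rescale by `u n = n ^ (t - s) * b n`. Since `(1 + 1/n) ^ (t - s) = 1 + O(1/n)`
and `1/n = o(n ^ (-s))` for `s < 1`, for every small `η > 0` the sequence `u` eventually satisfies
`u (n+1) ≤ (1 - a n) u n + a n M` with `a n = (c - η) / n ^ s` and `M = c' (1 + η) / (c - η)`.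
The excess `max (u n - M) 0` then contracts by the factors `1 - a n ≤ exp (-a n)`, whose product
vanishes because `∑ n ^ (-s)` diverges; so `limsup u ≤ M`, and `η → 0` gives `c' / c`.
-/

theorem tendsto_zero_of_le_one_sub_mul {v d : ℕ → ℝ} (hv : ∀ n, 0 ≤ v n)
    (hd : Tendsto (fun n => ∑ i ∈ range n, d i) atTop atTop)
    (hrec : ∀ᶠ n in atTop, v (n + 1) ≤ (1 - d n) * v n) :
    Tendsto v atTop (𝓝 0) := by
  obtain ⟨N, hN⟩ := eventually_atTop.1 hrec
  set S : ℕ → ℝ := fun n => ∑ i ∈ range n, d i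
  -- `1 - x ≤ exp (-x)` turns the product of the contraction factors into an exponential.
  have hbound : ∀ n ≥ N, v n ≤ v N * Real.exp (S N - S n) := by
    intro n hn
    induction n, hn using Nat.le_induction with
    | base => simp
    | succ n hn ih =>
      have hS : S N - S (n + 1) = -d n + (S N - S n) := by
        simp only [S, sum_range_succ]; ring
      calc v (n + 1) ≤ (1 - d n) * v n := hN n hn
        _ ≤ Real.exp (-d n) * (v N * Real.exp (S N - S n)) := by
          gcongr
          · exact hv n
          · linarith [Real.add_one_le_exp (-d n)]
        _ = v N * Real.exp (S N - S (n + 1)) := by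
          rw [hS, Real.exp_add]; ring
  have hlim : Tendsto (fun n => v N * Real.exp (S N - S n)) atTop (𝓝 0) := by
    simpa [sub_eq_neg_add, add_comm] using ((Real.tendsto_exp_neg_atTop_nhds_zero.comp
      (tendsto_atTop_add_const_right _ (-S N) hd)).const_mul (v N))
  exact squeeze_zero' (Eventually.of_forall hv) (eventually_atTop.2 ⟨N, hbound⟩) hlim

theorem limsup_le_of_le_one_sub_mul_add {u a : ℕ → ℝ} {M : ℝ}
    (hu : IsBoundedUnder (· ≥ ·) atTop u) (ha : ∀ᶠ n in atTop, a n ≤ 1)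
    (hsum : Tendsto (fun n => ∑ i ∈ range n, a i) atTop atTop)
    (hrec : ∀ᶠ n in atTop, u (n + 1) ≤ (1 - a n) * u n + a n * M) :
    limsup u atTop ≤ M := by
  set v : ℕ → ℝ := fun n => max (u n - M) 0
  have hv : Tendsto v atTop (𝓝 0) := by
    refine tendsto_zero_of_le_one_sub_mul (fun n => le_max_right _ _) hsum ?_
    filter_upwards [ha, hrec] with n ha hrec
    have h1a : 0 ≤ 1 - a n := sub_nonneg.2 ha
    refine max_le ?_ (mul_nonneg h1a (le_max_right _ _))
    calc u (n + 1) - M ≤ (1 - a n) * (u n - M) := by linarith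
      _ ≤ (1 - a n) * v n := mul_le_mul_of_nonneg_left (le_max_left _ _) h1a
  calc limsup u atTop ≤ limsup (fun n => M + v n) atTop :=
        limsup_le_limsup (Eventually.of_forall fun n => by linarith [le_max_left (u n - M) 0])
          hu.isCoboundedUnder_flip (hv.const_add M).isBoundedUnder_le
    _ = M := by simpa using (hv.const_add M).limsup_eq

theorem one_add_rpow_le_one_add_two_mul {x r : ℝ} (hx : 0 ≤ x) (hr : 0 ≤ r)
    (hrx : r * x ≤ 1) :
    (1 + x) ^ r ≤ 1 + 2 * r * x := by
  have hxr : |x * r| = x * r := abs_of_nonneg (mul_nonneg hx hr)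
  have hexp : |Real.exp (x * r) - 1| ≤ 2 * |x * r| :=
    Real.abs_exp_sub_one_le (by rw [hxr]; linarith)
  rw [hxr] at hexp
  calc (1 + x) ^ r ≤ Real.exp x ^ r := by
        gcongr; linarith [Real.add_one_le_exp x]
    _ = Real.exp (x * r) := (Real.exp_mul x r).symm
    _ ≤ 1 + 2 * r * x := by linarith [le_abs_self (Real.exp (x * r) - 1)]

theorem eventually_natCast_add_one_rpow_le {r s η : ℝ} (hr : 0 ≤ r) (hs : s < 1)
    (hη : 0 < η) :
    ∀ᶠ n : ℕ in atTop, ((n : ℝ) + 1) ^ r ≤ (1 + η / (n : ℝ) ^ s) * (n : ℝ) ^ r := by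
  have hpow : Tendsto (fun n : ℕ => (n : ℝ) ^ (1 - s)) atTop atTop :=
    (tendsto_rpow_atTop (by linarith)).comp tendsto_natCast_atTop_atTop
  filter_upwards [eventually_ge_atTop 1, tendsto_natCast_atTop_atTop.eventually_ge_atTop r,
    hpow.eventually_ge_atTop (2 * r / η)] with n hn1 hnr hns
  have hn : (0 : ℝ) < n := by exact_mod_cast hn1
  have hns' : 2 * r * (n : ℝ)⁻¹ ≤ η / (n : ℝ) ^ s := by
    rw [Real.rpow_sub hn, Real.rpow_one, div_le_iff₀ hη] at hns
    calc 2 * r * (n : ℝ)⁻¹ ≤ n / (n : ℝ) ^ s * η * (n : ℝ)⁻¹ := by gcongr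
      _ = η / (n : ℝ) ^ s := by field_simp
  calc ((n : ℝ) + 1) ^ r = (1 + (n : ℝ)⁻¹) ^ r * (n : ℝ) ^ r := by
        rw [← Real.mul_rpow (by positivity) hn.le, add_mul, inv_mul_cancel₀ hn.ne', one_mul,
          add_comm]
    _ ≤ (1 + 2 * r * (n : ℝ)⁻¹) * (n : ℝ) ^ r := by
        gcongr
        refine one_add_rpow_le_one_add_two_mul (by positivity) hr ?_
        rw [← div_eq_mul_inv, div_le_one hn]; exact hnr
    _ ≤ (1 + η / (n : ℝ) ^ s) * (n : ℝ) ^ r := by gcongr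

theorem tendsto_sum_range_div_rpow_atTop {k s : ℝ} (hk : 0 < k) (hs : s ≤ 1) :
    Tendsto (fun n => ∑ i ∈ range n, k / (i : ℝ) ^ s) atTop atTop := by
  rw [← not_summable_iff_tendsto_nat_atTop_of_nonneg fun i => by positivity]
  simp_rw [div_eq_mul_one_div k]
  rw [summable_mul_left_iff hk.ne', Real.summable_one_div_nat_rpow]
  exact not_lt.2 hs

theorem limsup_rpow_mul_le_of_recursion {b : ℕ → ℝ} (hb : ∀ n, 0 ≤ b n) {n₀ : ℕ}
    {s t c c' η : ℝ} (hs : 0 < s) (hs1 : s < 1) (hts : s < t) (hc' : 0 ≤ c')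
    (hη : 0 < η) (hηc : η < c)
    (hcontr : ∀ n : ℕ, n₀ ≤ n → c / (n : ℝ) ^ s ≤ 1)
    (hrec : ∀ n : ℕ, n₀ ≤ n →
      b (n + 1) ≤ (1 - c / (n : ℝ) ^ s) * b n + c' / (n : ℝ) ^ t) :
    limsup (fun n : ℕ => (n : ℝ) ^ (t - s) * b n) atTop ≤ c' * (1 + η) / (c - η) := by
  set u : ℕ → ℝ := fun n => (n : ℝ) ^ (t - s) * b n
  have hu : ∀ n, 0 ≤ u n := fun n => mul_nonneg (by positivity) (hb n)
  have hcη : 0 < c - η := sub_pos.2 hηc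
  refine limsup_le_of_le_one_sub_mul_add (isBoundedUnder_of ⟨0, hu⟩) ?_
    (tendsto_sum_range_div_rpow_atTop hcη hs1.le) ?_
  · filter_upwards [eventually_ge_atTop n₀] with n hn
    exact (div_le_div_of_nonneg_right (by linarith) (by positivity)).trans (hcontr n hn)
  · filter_upwards [eventually_ge_atTop (max n₀ 1),
      eventually_natCast_add_one_rpow_le (sub_nonneg.2 hts.le) hs1 hη] with n hn hpow
    have hn1 : (1 : ℝ) ≤ n := by exact_mod_cast (le_max_right _ _).trans hn
    have hn0 : (0 : ℝ) < n := by linarith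
    set X := ((n : ℝ) ^ s)⁻¹
    have hX0 : 0 ≤ X := by positivity
    have hX1 : X ≤ 1 := inv_le_one_of_one_le₀ (Real.one_le_rpow hn1 hs.le)
    calc u (n + 1) = ((n : ℝ) + 1) ^ (t - s) * b (n + 1) := by simp [u]
      _ ≤ (1 + η / (n : ℝ) ^ s) * (n : ℝ) ^ (t - s)
            * ((1 - c / (n : ℝ) ^ s) * b n + c' / (n : ℝ) ^ t) :=
          mul_le_mul hpow (hrec n ((le_max_left _ _).trans hn)) (hb _) (by positivity)
      _ = (1 + η * X) * ((1 - c * X) * u n + c' * X) := by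
          simp only [u, X, Real.rpow_sub hn0]; field_simp
      _ ≤ (1 - (c - η) * X) * u n + (c - η) * X * (c' * (1 + η) / (c - η)) := by
          rw [mul_comm (c - η) X, mul_assoc, mul_div_cancel₀ _ hcη.ne']
          have hcross : 0 ≤ η * c * X ^ 2 * u n := by
            have : 0 < c := hη.trans hηc
            have := hu n
            positivity
          have hsmall : 0 ≤ η * c' * X * (1 - X) := by
            have := sub_nonneg.2 hX1
            positivity
          nlinarith

theorem stmt_8_general (b : ℕ → ℝ) (hb : ∀ n, 0 ≤ b n) (n₀ : ℕ)
    (s t c c' : ℝ) (hs : 0 < s) (hs1 : s < 1) (hts : s < t) (hc : 0 < c) (hc' : 0 < c')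
    (hcontr : ∀ n : ℕ, n₀ ≤ n → c / (n : ℝ) ^ s ≤ 1)
    (hrec : ∀ n : ℕ, n₀ ≤ n →
      b (n + 1) ≤ (1 - c / (n : ℝ) ^ s) * b n + c' / (n : ℝ) ^ t) :
    limsup (fun n : ℕ => (n : ℝ) ^ (t - s) * b n) atTop ≤ c' / c := by
  have hbound : ∀ᶠ η in 𝓝[>] 0,
      limsup (fun n : ℕ => (n : ℝ) ^ (t - s) * b n) atTop ≤ c' * (1 + η) / (c - η) := by
    filter_upwards [Ioo_mem_nhdsGT hc] with η hη
    exact limsup_rpow_mul_le_of_recursion hb hs hs1 hts hc'.le hη.1 hη.2 hcontr hrec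
  have hlim : Tendsto (fun η : ℝ => c' * (1 + η) / (c - η)) (𝓝[>] 0) (𝓝 (c' / c)) := by
    have : ContinuousAt (fun η : ℝ => c' * (1 + η) / (c - η)) 0 := by
      fun_prop (disch := simpa using hc.ne')
    simpa using this.tendsto.mono_left nhdsWithin_le_nhds
  exact ge_of_tendsto hlim hbound

/-- Chung's Lemma (recursion form): if `{b_n}` is a sequence of nonnegative reals with
`b_{n+1} ≤ (1 − c/n^s) b_n + c'/n^t` for all `n ≥ n₀`, where `0 < s < 1`, `t > s`,
`c > 0`, `c' > 0` (and `c/n^s ≤ 1` for `n ≥ n₀`), then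
`limsup_{n→∞} n^{t−s} b_n ≤ c'/c`. -/
theorem stmt_8 (b : ℕ → ℝ) (hb : ∀ n, 0 ≤ b n) (n₀ : ℕ) (hn₀ : 1 ≤ n₀)
    (s t c c' : ℝ) (hs : 0 < s) (hs1 : s < 1) (hts : s < t) (hc : 0 < c) (hc' : 0 < c')
    (hcontr : ∀ n : ℕ, n₀ ≤ n → c / (n : ℝ) ^ s ≤ 1)
    (hrec : ∀ n : ℕ, n₀ ≤ n →
      b (n + 1) ≤ (1 - c / (n : ℝ) ^ s) * b n + c' / (n : ℝ) ^ t) :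
    limsup (fun n : ℕ => (n : ℝ) ^ (t - s) * b n) atTop ≤ c' / c :=
  stmt_8_general b hb n₀ s t c c' hs hs1 hts hc hc' hcontr hrec
end
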